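/- Let N ≥ 1 and let a, b : ℝ → ℝ be continuous. Let (σ_m)_{m∈ℕ} be positive reals with σ_m → 0, and for each m let (x^m, β^m) ∈ ℝ^N × ℝ^N satisfy the stationary Gauss–Galerkin equations with drift a, diffusion b and parameter σ_m, with x^m_1 < … < x^m_N, β^m_i > 0 for all i, and Σ_i β^m_i = 1. If x^m → x* and β^m → β* as m → ∞, then β*_i · a(x*_i) = 0 for every i; in particular the limiting probability measure Σ_i β*_i δ_{x*_i} is supported in the zero set of the drift a. -/

import Mathlib

open Finset

/-- `l'_{ii} = ∑_{k≠i} 1/(x_i − x_k)`, the derivative of the `i`-th Lagrange basis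
polynomial at its own node. -/
noncomputable def lpDiag {N : ℕ} (x : Fin N → ℝ) (i : Fin N) : ℝ :=
  ∑ k ∈ Finset.univ.erase i, 1 / (x i - x k)

/-- `l'_{ij} = (∏_{k≠j}(x_j − x_k)) / ((x_j − x_i)·∏_{k≠i}(x_i − x_k))` for `j ≠ i`,
the derivative of the `i`-th Lagrange basis polynomial at the node `x_j`. -/
noncomputable def lpOff {N : ℕ} (x : Fin N → ℝ) (i j : Fin N) : ℝ :=
  (∏ k ∈ Finset.univ.erase j, (x j - x k)) /
    ((x j - x i) * ∏ k ∈ Finset.univ.erase i, (x i - x k))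

/-- `l''_{ii} = (∑_{k≠i} 1/(x_i − x_k))² − ∑_{k≠i} 1/(x_i − x_k)²`, the second derivative
of the `i`-th Lagrange basis polynomial at its own node. -/
noncomputable def lppDiag {N : ℕ} (x : Fin N → ℝ) (i : Fin N) : ℝ :=
  (∑ k ∈ Finset.univ.erase i, 1 / (x i - x k)) ^ 2 -
    ∑ k ∈ Finset.univ.erase i, 1 / (x i - x k) ^ 2

/-- Right-hand side of the Gauss–Galerkin node equation (the `x`-equation):
`β_i A_i + σ²(2 β_i b(x_i)² l'_{ii} + ∑_{j≠i} β_j b(x_j)² (x_j − x_i)(l'_{ij})²)`,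
where `A_i` is the drift value at node `i` (possibly configuration dependent). -/
noncomputable def ggDriftRHS {N : ℕ} (A : Fin N → ℝ) (b : ℝ → ℝ) (σ : ℝ)
    (x β : Fin N → ℝ) (i : Fin N) : ℝ :=
  β i * A i + σ ^ 2 * (2 * β i * (b (x i)) ^ 2 * lpDiag x i +
    ∑ j ∈ Finset.univ.erase i, β j * (b (x j)) ^ 2 * (x j - x i) * (lpOff x i j) ^ 2)

/-- Right-hand side of the Gauss–Galerkin weight equation (the `β`-equation):
`2 β_i A_i l'_{ii} + σ²(β_i b(x_i)²((l'_{ii})² + l''_{ii}) + ∑_{j≠i} β_j b(x_j)²(l'_{ij})²)`. -/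
noncomputable def ggWeightRHS {N : ℕ} (A : Fin N → ℝ) (b : ℝ → ℝ) (σ : ℝ)
    (x β : Fin N → ℝ) (i : Fin N) : ℝ :=
  2 * β i * A i * lpDiag x i +
    σ ^ 2 * (β i * (b (x i)) ^ 2 * ((lpDiag x i) ^ 2 + lppDiag x i) +
      ∑ j ∈ Finset.univ.erase i, β j * (b (x j)) ^ 2 * (lpOff x i j) ^ 2)

/-- The stationary Gauss–Galerkin equations with node-dependent drift values `A_i`. -/
def StationaryGGWithDrift {N : ℕ} (A : Fin N → ℝ) (b : ℝ → ℝ) (σ : ℝ)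
    (x β : Fin N → ℝ) : Prop :=
  ∀ i, 0 = ggDriftRHS A b σ x β i ∧ 0 = ggWeightRHS A b σ x β i

/-- The stationary Gauss–Galerkin equations with drift `a : ℝ → ℝ`,
diffusion `b : ℝ → ℝ` and parameter `σ`. -/
def StationaryGG {N : ℕ} (a b : ℝ → ℝ) (σ : ℝ) (x β : Fin N → ℝ) : Prop :=
  StationaryGGWithDrift (fun i => a (x i)) b σ x β

/-!
Testing against the Hermite basis `ℓᵢ²`, `(X - xᵢ) ℓᵢ²` of the polynomials of degree `< 2N`
(`ℓᵢ` the Lagrange basis on the nodes) turns the two Gauss–Galerkin equations at node `i` into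
`∫ 𝓛 p dμ = 0` for these two test polynomials, where `μ = ∑ βⱼ δ_{xⱼ}` and
`𝓛 = a ∂ + (σ²/2) b² ∂²`; hence `∫ 𝓛 p dμ = 0` for every `p` of degree `< 2N`. For a fixed `p`
this passes to the limit `σ → 0` and gives `∑ β*ⱼ a(x*ⱼ) p'(x*ⱼ) = 0`. The limit nodes may
coincide, but Hermite interpolation on the distinct ones still yields `p` of degree `< 2N` with
`p'` equal to `1` at `x*ᵢ` and `0` at the other limit nodes, so the total weight sitting at `x*ᵢ`
times `a(x*ᵢ)` vanishes; as the weights are nonnegative, `β*ᵢ a(x*ᵢ) = 0`.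
-/

open Polynomial Filter Topology

namespace Polynomial

variable {R : Type*} [CommRing R] (ℓ : R[X]) (c y : R)

theorem eval_derivative_sq :
    (derivative (ℓ ^ 2)).eval y = 2 * ℓ.eval y * (derivative ℓ).eval y := by
  simp only [derivative_sq, eval_mul, eval_C]

theorem eval_derivative_derivative_sq :
    (derivative (derivative (ℓ ^ 2))).eval y =
      2 * ((derivative ℓ).eval y ^ 2 + ℓ.eval y * (derivative (derivative ℓ)).eval y) := by
  simp only [derivative_sq, derivative_mul, derivative_C, zero_mul, zero_add, eval_add, eval_mul,
    eval_C]
  ring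

theorem eval_derivative_X_sub_C_mul_sq :
    (derivative ((X - C c) * ℓ ^ 2)).eval y =
      ℓ.eval y ^ 2 + 2 * (y - c) * ℓ.eval y * (derivative ℓ).eval y := by
  simp only [derivative_mul, derivative_sub, derivative_X, derivative_C, sub_zero, one_mul,
    derivative_sq, eval_add, eval_pow, eval_mul, eval_sub, eval_X, eval_C, add_right_inj]
  ring

theorem eval_derivative_derivative_X_sub_C_mul_sq :
    (derivative (derivative ((X - C c) * ℓ ^ 2))).eval y =
      4 * ℓ.eval y * (derivative ℓ).eval y +
        2 * (y - c) *
          ((derivative ℓ).eval y ^ 2 + ℓ.eval y * (derivative (derivative ℓ)).eval y) := by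
  simp only [derivative_mul, derivative_sub, derivative_X, derivative_C, sub_zero, one_mul,
    derivative_sq, derivative_add, zero_mul, zero_add, eval_add, eval_mul, eval_C, eval_sub, eval_X]
  ring

theorem eq_zero_of_mem_degreeLT_of_eval_derivative_eq_zero {F ι : Type*} [Field F]
    {s : Finset ι} {v : ι → F} (hvs : Set.InjOn v s) {f : F[X]} (hf : f ∈ degreeLT F (2 * #s))
    (h₀ : ∀ i ∈ s, f.eval (v i) = 0) (h₁ : ∀ i ∈ s, (derivative f).eval (v i) = 0) : f = 0 := by
  by_contra hne
  have hsq : ∀ i ∈ s, (X - C (v i)) ^ 2 ∣ f := fun i hi =>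
    (pow_dvd_pow _ ((one_lt_rootMultiplicity_iff_isRoot hne).2 ⟨h₀ i hi, h₁ i hi⟩)).trans
      (pow_rootMultiplicity_dvd f (v i))
  have hprod : Lagrange.nodal s v ^ 2 ∣ f := by
    rw [Lagrange.nodal, ← prod_pow]
    refine prod_dvd_of_coprime (fun i hi j hj hij => ?_) hsq
    exact (isCoprime_X_sub_C_of_isUnit_sub (sub_ne_zero.2 (hvs.ne hi hj hij)).isUnit).pow
  have hlt : f.natDegree < 2 * #s := by
    rwa [mem_degreeLT, degree_eq_natDegree hne, Nat.cast_lt] at hf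
  have hle := natDegree_le_of_dvd hprod hne
  rw [natDegree_pow, Lagrange.natDegree_nodal] at hle
  omega

end Polynomial

namespace Lagrange

variable {F ι : Type*} [Field F] [DecidableEq ι] {s t : Finset ι} {v : ι → F} {i j : ι} {z : F}

theorem eval_derivative_nodal (hz : ∀ k ∈ t, z ≠ v k) :
    (derivative (nodal t v)).eval z = (nodal t v).eval z * ∑ k ∈ t, (z - v k)⁻¹ := by
  rw [derivative_nodal, eval_finsetSum, mul_sum]
  refine sum_congr rfl fun k hk => ?_
  rw [eval_nodal, eval_nodal, ← mul_prod_erase t _ hk, mul_comm (z - v k), mul_assoc,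
    mul_inv_cancel₀ (sub_ne_zero.2 (hz k hk)), mul_one]

theorem eval_derivative_derivative_nodal (hz : ∀ k ∈ t, z ≠ v k) :
    (derivative (derivative (nodal t v))).eval z =
      (nodal t v).eval z * ((∑ k ∈ t, (z - v k)⁻¹) ^ 2 - ∑ k ∈ t, ((z - v k) ^ 2)⁻¹) := by
  have hterm : ∀ k ∈ t, (derivative (nodal (t.erase k) v)).eval z =
      (nodal t v).eval z * ((z - v k)⁻¹ * ∑ l ∈ t, (z - v l)⁻¹ - ((z - v k) ^ 2)⁻¹) := by
    intro k hk
    have hzk : z - v k ≠ 0 := sub_ne_zero.2 (hz k hk)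
    rw [eval_derivative_nodal fun l hl => hz l (mem_of_mem_erase hl), sum_erase_eq_sub hk,
      eval_nodal, eval_nodal, ← mul_prod_erase t _ hk]
    field_simp
  rw [derivative_nodal, derivative_sum, eval_finsetSum, sum_congr rfl hterm, ← mul_sum,
    sum_sub_distrib, ← sum_mul, sq]

theorem basis_eq_C_nodalWeight_mul_nodal_erase (hi : i ∈ s) :
    Lagrange.basis s v i = C (nodalWeight s v i) * nodal (s.erase i) v := by
  rw [basis_eq_prod_sub_inv_mul_nodal_div hi, nodal_erase_eq_nodal_div hi]

theorem eval_derivative_basis_self (hvs : Set.InjOn v s) (hi : i ∈ s) :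
    (derivative (Lagrange.basis s v i)).eval (v i) = ∑ k ∈ s.erase i, (v i - v k)⁻¹ := by
  have hnode : ∀ k ∈ s.erase i, v i ≠ v k := fun k hk =>
    hvs.ne hi (mem_of_mem_erase hk) (ne_of_mem_erase hk).symm
  have hself := eval_basis_self hvs hi
  rw [basis_eq_C_nodalWeight_mul_nodal_erase hi, eval_mul, eval_C] at hself
  rw [basis_eq_C_nodalWeight_mul_nodal_erase hi, derivative_C_mul, eval_mul, eval_C,
    eval_derivative_nodal hnode, ← mul_assoc, hself, one_mul]

theorem eval_derivative_derivative_basis_self (hvs : Set.InjOn v s) (hi : i ∈ s) :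
    (derivative (derivative (Lagrange.basis s v i))).eval (v i) =
      (∑ k ∈ s.erase i, (v i - v k)⁻¹) ^ 2 - ∑ k ∈ s.erase i, ((v i - v k) ^ 2)⁻¹ := by
  have hnode : ∀ k ∈ s.erase i, v i ≠ v k := fun k hk =>
    hvs.ne hi (mem_of_mem_erase hk) (ne_of_mem_erase hk).symm
  have hself := eval_basis_self hvs hi
  rw [basis_eq_C_nodalWeight_mul_nodal_erase hi, eval_mul, eval_C] at hself
  rw [basis_eq_C_nodalWeight_mul_nodal_erase hi, derivative_C_mul, derivative_C_mul, eval_mul,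
    eval_C, eval_derivative_derivative_nodal hnode, ← mul_assoc, hself, one_mul]

theorem eval_derivative_basis_of_ne (hvs : Set.InjOn v s) (hi : i ∈ s) (hj : j ∈ s)
    (hji : j ≠ i) :
    (derivative (Lagrange.basis s v i)).eval (v j) =
      (∏ k ∈ s.erase j, (v j - v k)) / ((v j - v i) * ∏ k ∈ s.erase i, (v i - v k)) := by
  have hji' : v j - v i ≠ 0 := sub_ne_zero.2 (hvs.ne hj hi hji)
  rw [basis_eq_C_nodalWeight_mul_nodal_erase hi, derivative_C_mul, eval_mul, eval_C,
    eval_nodal_derivative_eval_node_eq (mem_erase.2 ⟨hji, hj⟩), eval_nodal, nodalWeight,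
    prod_inv_distrib, ← mul_prod_erase (s.erase j) (fun k => v j - v k)
      (mem_erase.2 ⟨hji.symm, hi⟩), erase_right_comm]
  field_simp

theorem eval_basis (hvs : Set.InjOn v s) (hi : i ∈ s) (hj : j ∈ s) :
    (Lagrange.basis s v i).eval (v j) = if j = i then 1 else 0 := by
  split_ifs with h
  · rw [h, eval_basis_self hvs hi]
  · exact eval_basis_of_ne (Ne.symm h) hj

theorem mem_degreeLT_X_sub_C_mul_basis_sq (hvs : Set.InjOn v s) (hi : i ∈ s) :
    (X - C (v i)) * Lagrange.basis s v i ^ 2 ∈ degreeLT F (2 * #s) := by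
  have hs : 0 < #s := card_pos.2 ⟨i, hi⟩
  have hdeg : ((X - C (v i)) * Lagrange.basis s v i ^ 2).natDegree < 2 * #s := by
    refine natDegree_mul_le.trans_lt ?_
    grw [natDegree_X_sub_C_le, natDegree_pow_le, natDegree_basis hvs hi]
    omega
  exact mem_degreeLT.2 <| degree_le_natDegree.trans_lt <| WithBot.coe_lt_coe.2 hdeg

theorem mem_degreeLT_basis_sq (hvs : Set.InjOn v s) (hi : i ∈ s) :
    Lagrange.basis s v i ^ 2 ∈ degreeLT F (2 * #s) := by
  have hs : 0 < #s := card_pos.2 ⟨i, hi⟩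
  have hdeg : (Lagrange.basis s v i ^ 2).natDegree < 2 * #s :=
    natDegree_pow_le.trans_lt (by rw [natDegree_basis hvs hi]; omega)
  exact mem_degreeLT.2 <| degree_le_natDegree.trans_lt <| WithBot.coe_lt_coe.2 hdeg

theorem eval_derivative_X_sub_C_mul_basis_sq (hvs : Set.InjOn v s) (hi : i ∈ s) (hj : j ∈ s) :
    (derivative ((X - C (v i)) * Lagrange.basis s v i ^ 2)).eval (v j) =
      if j = i then 1 else 0 := by
  rw [eval_derivative_X_sub_C_mul_sq, eval_basis hvs hi hj]
  split_ifs with h <;> simp [h]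

theorem eq_sum_hermite (hvs : Set.InjOn v s) {p : F[X]} (hp : p ∈ degreeLT F (2 * #s)) :
    p = ∑ i ∈ s, (p.eval (v i) • Lagrange.basis s v i ^ 2 +
      ((derivative p).eval (v i) - 2 * (derivative (Lagrange.basis s v i)).eval (v i) *
        p.eval (v i)) • ((X - C (v i)) * Lagrange.basis s v i ^ 2)) := by
  set c : ι → F := fun i => p.eval (v i)
  set d : ι → F := fun i => (derivative p).eval (v i) -
    2 * (derivative (Lagrange.basis s v i)).eval (v i) * p.eval (v i)
  have hval : ∀ j ∈ s, ∀ i ∈ s, (c i • Lagrange.basis s v i ^ 2 +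
      d i • ((X - C (v i)) * Lagrange.basis s v i ^ 2)).eval (v j) = if j = i then c i else 0 := by
    intro j hj i hi
    simp only [eval_add, eval_smul, eval_mul, eval_pow, eval_sub, eval_X, eval_C, smul_eq_mul,
      eval_basis hvs hi hj]
    split_ifs with h <;> simp [h]
  have hder : ∀ j ∈ s, ∀ i ∈ s, (derivative (c i • Lagrange.basis s v i ^ 2 +
      d i • ((X - C (v i)) * Lagrange.basis s v i ^ 2))).eval (v j) =
        if j = i then (derivative p).eval (v i) else 0 := by
    intro j hj i hi
    simp only [derivative_add, derivative_smul, eval_add, eval_smul, smul_eq_mul,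
      eval_derivative_sq, eval_derivative_X_sub_C_mul_sq, eval_basis hvs hi hj]
    split_ifs with h
    · subst h; simp only [c, d]; ring
    · ring
  refine sub_eq_zero.1 (eq_zero_of_mem_degreeLT_of_eval_derivative_eq_zero hvs ?_ ?_ ?_)
  · refine Submodule.sub_mem _ hp (Submodule.sum_mem _ fun i hi => Submodule.add_mem _ ?_ ?_)
    · exact Submodule.smul_mem _ _ (mem_degreeLT_basis_sq hvs hi)
    · exact Submodule.smul_mem _ _ (mem_degreeLT_X_sub_C_mul_basis_sq hvs hi)
  · intro j hj
    rw [eval_sub, eval_finsetSum, sum_congr rfl (hval j hj), sum_ite_eq, if_pos hj, sub_self]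
  · intro j hj
    rw [derivative_sub, derivative_sum, eval_sub, eval_finsetSum, sum_congr rfl (hder j hj),
      sum_ite_eq, if_pos hj, sub_self]

theorem exists_mem_degreeLT_eval_derivative_eq_ite [DecidableEq F] {S : Finset F} {y : F}
    (hy : y ∈ S) :
    ∃ p ∈ degreeLT F (2 * #S), ∀ z ∈ S, (derivative p).eval z = if z = y then 1 else 0 :=
  ⟨_, mem_degreeLT_X_sub_C_mul_basis_sq (Set.injOn_id _) hy,
    fun _ hz => eval_derivative_X_sub_C_mul_basis_sq (v := id) (Set.injOn_id _) hy hz⟩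

end Lagrange

section GeneratorPairing

variable {ι : Type*} [Fintype ι]

/-- `p ↦ ∫ 𝓛 p dμ` for `μ = ∑ βⱼ δ_{xⱼ}` and the generator `𝓛 = A ∂ + (σ²/2) b² ∂²`, the drift
being given by its values `Aⱼ` at the nodes. -/
noncomputable def generatorPairing (A : ι → ℝ) (b : ℝ → ℝ) (σ : ℝ) (x β : ι → ℝ) :
    ℝ[X] →ₗ[ℝ] ℝ :=
  ∑ j, β j • (A j • leval (x j) ∘ₗ derivative +
    (σ ^ 2 / 2 * b (x j) ^ 2) • leval (x j) ∘ₗ derivative ∘ₗ derivative)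

theorem generatorPairing_apply (A : ι → ℝ) (b : ℝ → ℝ) (σ : ℝ) (x β : ι → ℝ) (p : ℝ[X]) :
    generatorPairing A b σ x β p = ∑ j, β j * (A j * (derivative p).eval (x j) +
      σ ^ 2 / 2 * b (x j) ^ 2 * (derivative (derivative p)).eval (x j)) := by
  simp [generatorPairing, mul_add]

theorem tendsto_generatorPairing {α : Type*} {l : Filter α} {a b : ℝ → ℝ} (ha : Continuous a)
    (hb : Continuous b) {σ : α → ℝ} {σ₀ : ℝ} (hσ : Tendsto σ l (𝓝 σ₀)) {x β : α → ι → ℝ}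
    {x₀ β₀ : ι → ℝ} (hx : ∀ j, Tendsto (fun m => x m j) l (𝓝 (x₀ j)))
    (hβ : ∀ j, Tendsto (fun m => β m j) l (𝓝 (β₀ j))) (p : ℝ[X]) :
    Tendsto (fun m => generatorPairing (fun j => a (x m j)) b (σ m) (x m) (β m) p) l
      (𝓝 (generatorPairing (fun j => a (x₀ j)) b σ₀ x₀ β₀ p)) := by
  simp only [generatorPairing_apply]
  refine tendsto_finsetSum _ fun j _ => ?_
  have hcomp : ∀ f : ℝ → ℝ, Continuous f → Tendsto (fun m => f (x m j)) l (𝓝 (f (x₀ j))) :=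
    fun f hf => (hf.tendsto _).comp (hx j)
  exact (hβ j).mul (((hcomp a ha).mul (hcomp _ (derivative p).continuous)).add
    ((((hσ.pow 2).div_const 2).mul ((hcomp b hb).pow 2)).mul
      (hcomp _ (derivative (derivative p)).continuous)))

end GeneratorPairing

section GaussGalerkin

variable {N : ℕ} {x : Fin N → ℝ}

theorem eval_derivative_basis_self_eq_lpDiag (hx : Function.Injective x) (i : Fin N) :
    (derivative (Lagrange.basis univ x i)).eval (x i) = lpDiag x i := by
  simp only [Lagrange.eval_derivative_basis_self hx.injOn (mem_univ i), lpDiag, one_div]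

theorem eval_derivative_derivative_basis_self_eq_lppDiag (hx : Function.Injective x) (i : Fin N) :
    (derivative (derivative (Lagrange.basis univ x i))).eval (x i) = lppDiag x i := by
  simp only [Lagrange.eval_derivative_derivative_basis_self hx.injOn (mem_univ i), lppDiag,
    one_div]

theorem eval_derivative_basis_eq_lpOff (hx : Function.Injective x) {i j : Fin N} (hji : j ≠ i) :
    (derivative (Lagrange.basis univ x i)).eval (x j) = lpOff x i j :=
  Lagrange.eval_derivative_basis_of_ne hx.injOn (mem_univ i) (mem_univ j) hji

variable {A : Fin N → ℝ} {b : ℝ → ℝ} {σ : ℝ} {β : Fin N → ℝ}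

theorem generatorPairing_basis_sq (hx : Function.Injective x) (i : Fin N) :
    generatorPairing A b σ x β (Lagrange.basis univ x i ^ 2) = ggWeightRHS A b σ x β i := by
  set ℓ := Lagrange.basis univ x i
  have hoff : ∀ j ∈ univ.erase i, β j * (A j * (derivative (ℓ ^ 2)).eval (x j) +
      σ ^ 2 / 2 * b (x j) ^ 2 * (derivative (derivative (ℓ ^ 2))).eval (x j)) =
        σ ^ 2 * (β j * b (x j) ^ 2 * lpOff x i j ^ 2) := by
    intro j hj
    have hji := ne_of_mem_erase hj
    rw [eval_derivative_sq, eval_derivative_derivative_sq,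
      Lagrange.eval_basis_of_ne hji.symm (mem_univ j), eval_derivative_basis_eq_lpOff hx hji]
    ring
  rw [generatorPairing_apply, ← add_sum_erase _ _ (mem_univ i), sum_congr rfl hoff, ← mul_sum,
    eval_derivative_sq, eval_derivative_derivative_sq,
    Lagrange.eval_basis_self hx.injOn (mem_univ i), eval_derivative_basis_self_eq_lpDiag hx,
    eval_derivative_derivative_basis_self_eq_lppDiag hx, ggWeightRHS]
  ring

theorem generatorPairing_X_sub_C_mul_basis_sq (hx : Function.Injective x) (i : Fin N) :
    generatorPairing A b σ x β ((X - C (x i)) * Lagrange.basis univ x i ^ 2) =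
      ggDriftRHS A b σ x β i := by
  set ℓ := Lagrange.basis univ x i
  have hoff : ∀ j ∈ univ.erase i, β j * (A j * (derivative ((X - C (x i)) * ℓ ^ 2)).eval (x j) +
      σ ^ 2 / 2 * b (x j) ^ 2 * (derivative (derivative ((X - C (x i)) * ℓ ^ 2))).eval (x j)) =
        σ ^ 2 * (β j * b (x j) ^ 2 * (x j - x i) * lpOff x i j ^ 2) := by
    intro j hj
    have hji := ne_of_mem_erase hj
    rw [eval_derivative_X_sub_C_mul_sq, eval_derivative_derivative_X_sub_C_mul_sq,
      Lagrange.eval_basis_of_ne hji.symm (mem_univ j), eval_derivative_basis_eq_lpOff hx hji]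
    ring
  rw [generatorPairing_apply, ← add_sum_erase _ _ (mem_univ i), sum_congr rfl hoff, ← mul_sum,
    eval_derivative_X_sub_C_mul_sq, eval_derivative_derivative_X_sub_C_mul_sq,
    Lagrange.eval_basis_self hx.injOn (mem_univ i), eval_derivative_basis_self_eq_lpDiag hx,
    ggDriftRHS]
  ring

theorem StationaryGGWithDrift.generatorPairing_eq_zero (hsol : StationaryGGWithDrift A b σ x β)
    (hx : Function.Injective x) {p : ℝ[X]} (hp : p ∈ degreeLT ℝ (2 * N)) :
    generatorPairing A b σ x β p = 0 := by
  rw [← Fintype.card_fin N, ← card_univ] at hp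
  rw [Lagrange.eq_sum_hermite hx.injOn hp, map_sum]
  refine sum_eq_zero fun i _ => ?_
  rw [map_add, map_smul, map_smul, generatorPairing_basis_sq hx,
    generatorPairing_X_sub_C_mul_basis_sq hx, ← (hsol i).1, ← (hsol i).2, smul_zero,
    smul_zero, add_zero]

end GaussGalerkin

theorem stationaryGG_limit_on_drift_zeros_general {N : ℕ}
    (a b : ℝ → ℝ) (ha : Continuous a) (hb : Continuous b)
    (σ : ℕ → ℝ) (hσlim : Tendsto σ atTop (nhds 0))
    (x β : ℕ → Fin N → ℝ)
    (hsol : ∀ m, StationaryGG a b (σ m) (x m) (β m))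
    (hmono : ∀ m, StrictMono (x m))
    (hβpos : ∀ m i, 0 < β m i)
    (xs βs : Fin N → ℝ)
    (hxlim : ∀ i, Tendsto (fun m => x m i) atTop (nhds (xs i)))
    (hβlim : ∀ i, Tendsto (fun m => β m i) atTop (nhds (βs i))) :
    ∀ i, βs i * a (xs i) = 0 := by
  intro i
  obtain ⟨p, hp, hp'⟩ :=
    Lagrange.exists_mem_degreeLT_eval_derivative_eq_ite (mem_image_of_mem xs (mem_univ i))
  have hpN : p ∈ degreeLT ℝ (2 * N) :=
    degreeLT_mono (by grw [card_image_le, card_univ, Fintype.card_fin]) hp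
  have hlimit : generatorPairing (fun j => a (xs j)) b 0 xs βs p = 0 := by
    refine tendsto_nhds_unique (tendsto_generatorPairing ha hb hσlim hxlim hβlim p) ?_
    simp only [fun m => (hsol m).generatorPairing_eq_zero (hmono m).injective hpN,
      tendsto_const_nhds]
  have hcluster : (∑ j ∈ univ.filter (fun j => xs j = xs i), βs j) * a (xs i) = 0 := by
    rw [← hlimit, generatorPairing_apply, sum_mul, sum_filter]
    refine sum_congr rfl fun j _ => ?_
    rw [hp' _ (mem_image_of_mem xs (mem_univ j))]
    split_ifs with h
    · rw [h]; ring
    · ring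
  have hβnonneg (j : Fin N) : 0 ≤ βs j :=
    ge_of_tendsto' (hβlim j) fun m => (hβpos m j).le
  rcases mul_eq_zero.1 hcluster with hsum | hzero
  · rw [(sum_eq_zero_iff_of_nonneg fun j _ => hβnonneg j).1 hsum i (by simp), zero_mul]
  · rw [hzero, mul_zero]

/-- **Limits of stationary Gauss–Galerkin solutions as `σ ↓ 0` concentrate on zeros of
the drift.** If `(x^m, β^m)` solve the stationary Gauss–Galerkin equations with
parameters `σ_m ↓ 0`, with ordered nodes, positive weights summing to `1`, and
`(x^m, β^m) → (x*, β*)`, then `β*_i · a(x*_i) = 0` for every `i`; in particular the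
limiting probability measure `∑_i β*_i δ_{x*_i}` is supported in the zero set of `a`. -/
theorem stationaryGG_limit_on_drift_zeros {N : ℕ} (hN : 1 ≤ N)
    (a b : ℝ → ℝ) (ha : Continuous a) (hb : Continuous b)
    (σ : ℕ → ℝ) (hσpos : ∀ m, 0 < σ m) (hσlim : Tendsto σ atTop (nhds 0))
    (x β : ℕ → Fin N → ℝ)
    (hsol : ∀ m, StationaryGG a b (σ m) (x m) (β m))
    (hmono : ∀ m, StrictMono (x m))
    (hβpos : ∀ m i, 0 < β m i)
    (hβsum : ∀ m, ∑ i, β m i = 1)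
    (xs βs : Fin N → ℝ)
    (hxlim : ∀ i, Tendsto (fun m => x m i) atTop (nhds (xs i)))
    (hβlim : ∀ i, Tendsto (fun m => β m i) atTop (nhds (βs i))) :
    ∀ i, βs i * a (xs i) = 0 :=
  stationaryGG_limit_on_drift_zeros_general a b ha hb σ hσlim x β hsol hmono hβpos xs βs hxlim hβlim
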